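/- Let h = Lie(x_1, …, x_n) / ideal([x_i, x_1 + ⋯ + x_n] : 1 ≤ i ≤ n) be the holonomy Lie algebra (over ℚ) of the uniform matroid U_{2,n}. Then h is isomorphic, as a graded Lie algebra, to the direct product Lie(ℚ^{n−1}) × Lie(ℚ) of a free Lie algebra on n−1 generators and a free Lie algebra on one generator. -/

import Mathlib

/-!
In the quotient, `z = x₁ + ⋯ + xₙ` commutes with every generator and is therefore central, so
`yⱼ = xⱼ - xₙ` (`j < n`) and `z` define a map `Lie(y₁, …, yₙ₋₁) × Lie(z) → h`. Conversely
`xᵢ ↦ (yᵢ - (y₁ + ⋯ + yₙ₋₁)/n, z/n)` (with `yₙ = 0`) sends `z` to `(0, z)`, hence kills every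
`[xᵢ, z]` and descends to `h`; on generators the two maps are mutually inverse.
-/

instance prodLieRing {L₁ L₂ : Type*} [LieRing L₁] [LieRing L₂] : LieRing (L₁ × L₂) where
  bracket p q := (⁅p.1, q.1⁆, ⁅p.2, q.2⁆)
  add_lie p q r := Prod.ext (add_lie p.1 q.1 r.1) (add_lie p.2 q.2 r.2)
  lie_add p q r := Prod.ext (lie_add p.1 q.1 r.1) (lie_add p.2 q.2 r.2)
  lie_self p := Prod.ext (lie_self p.1) (lie_self p.2)
  leibniz_lie p q r := Prod.ext (leibniz_lie p.1 q.1 r.1) (leibniz_lie p.2 q.2 r.2)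

instance prodLieAlgebra {K L₁ L₂ : Type*} [CommRing K] [LieRing L₁] [LieRing L₂]
    [LieAlgebra K L₁] [LieAlgebra K L₂] : LieAlgebra K (L₁ × L₂) where
  lie_smul c p q := Prod.ext (lie_smul c p.1 q.1) (lie_smul c p.2 q.2)

namespace LieSubalgebra

variable (R : Type*) {L : Type*} [CommRing R] [LieRing L] [LieAlgebra R L]

def centralizer (a : L) : LieSubalgebra R L where
  carrier := {u | ⁅u, a⁆ = 0}
  add_mem' {u v} hu hv := by simp_all [add_lie]
  zero_mem' := zero_lie a
  smul_mem' t u hu := by simp_all [smul_lie]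
  lie_mem' {u v} hu hv := by simp_all [lie_lie]

end LieSubalgebra

namespace LieIdeal

variable {R L M : Type*} [CommRing R] [LieRing L] [LieAlgebra R L] [LieRing M] [LieAlgebra R M]
  (I : LieIdeal R L)

def mkQ : L →ₗ⁅R⁆ L ⧸ I where
  toLinearMap := I.toSubmodule.mkQ
  map_lie' := rfl

theorem mkQ_surjective : Function.Surjective I.mkQ := Submodule.mkQ_surjective _

theorem mkQ_eq_zero_iff {x : L} : I.mkQ x = 0 ↔ x ∈ I := Submodule.Quotient.mk_eq_zero _

def liftQ (f : L →ₗ⁅R⁆ M) (h : I ≤ f.ker) : L ⧸ I →ₗ⁅R⁆ M where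
  toLinearMap := I.toSubmodule.liftQ f fun _ hx => LieHom.mem_ker.mp (h hx)
  map_lie' := by
    rintro ⟨a⟩ ⟨b⟩
    exact f.map_lie a b

@[simp]
theorem liftQ_mkQ (f : L →ₗ⁅R⁆ M) (h : I ≤ f.ker) (x : L) : I.liftQ f h (I.mkQ x) = f x := rfl

theorem lieHom_qext {f g : L ⧸ I →ₗ⁅R⁆ M} (h : f.comp I.mkQ = g.comp I.mkQ) : f = g :=
  LieHom.ext fun u => by
    obtain ⟨x, rfl⟩ := I.mkQ_surjective u
    exact LieHom.congr_fun h x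

end LieIdeal

namespace LieHom

variable {R L₁ L₂ M : Type*} [CommRing R] [LieRing L₁] [LieAlgebra R L₁] [LieRing L₂]
  [LieAlgebra R L₂] [LieRing M] [LieAlgebra R M]

def coprod (f : L₁ →ₗ⁅R⁆ M) (g : L₂ →ₗ⁅R⁆ M) (h : ∀ a b, ⁅f a, g b⁆ = 0) :
    L₁ × L₂ →ₗ⁅R⁆ M where
  toLinearMap := f.toLinearMap.coprod g.toLinearMap
  map_lie' := by
    rintro ⟨a₁, b₁⟩ ⟨a₂, b₂⟩
    simp [lie_add, add_lie, h, ← lie_skew (g _) (f _)]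

@[simp]
theorem coprod_apply (f : L₁ →ₗ⁅R⁆ M) (g : L₂ →ₗ⁅R⁆ M) (h : ∀ a b, ⁅f a, g b⁆ = 0)
    (p : L₁ × L₂) : coprod f g h p = f p.1 + g p.2 := rfl

end LieHom

namespace FreeLieAlgebra

variable {R X L : Type*} [CommRing R] [LieRing L] [LieAlgebra R L]

theorem hom_apply_mem {F : FreeLieAlgebra R X →ₗ⁅R⁆ L} {S : LieSubalgebra R L}
    (h : ∀ x, F (of R x) ∈ S) (y : FreeLieAlgebra R X) : F y ∈ S := by
  let G : FreeLieAlgebra R X →ₗ⁅R⁆ S := lift R fun x => ⟨F (of R x), h x⟩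
  have hG : S.incl.comp G = F := hom_ext fun x => by simp [G]
  rw [← hG]
  exact (G y).2

theorem mem_center_of_forall_lie_eq_zero {F : FreeLieAlgebra R X →ₗ⁅R⁆ L}
    (hF : Function.Surjective F) {a : L} (h : ∀ x, ⁅F (of R x), a⁆ = 0) :
    a ∈ LieAlgebra.center R L := by
  rw [LieModule.mem_maxTrivSubmodule]
  intro u
  obtain ⟨y, rfl⟩ := hF u
  exact hom_apply_mem (S := LieSubalgebra.centralizer R a) h y

end FreeLieAlgebra

theorem nsmul_invOf_smul (R : Type*) [Semiring R] {M : Type*} [AddCommMonoid M] [Module R M]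
    (n : ℕ) [Invertible (n : R)] (v : M) : n • ⅟(n : R) • v = v := by
  rw [← Nat.cast_smul_eq_nsmul R, smul_invOf_smul]

open FreeLieAlgebra

section

variable (R : Type*) [CommRing R] (X : Type*) [Fintype X]

noncomputable def uniformHolonomyIdeal : LieIdeal R (FreeLieAlgebra R X) :=
  LieSubmodule.lieSpan R _ {y | ∃ i : X, y = ⁅of R i, ∑ j : X, of R j⁆}

/-- The holonomy Lie algebra of the uniform matroid `U_{2,|X|}`. -/
abbrev UniformHolonomy : Type _ := FreeLieAlgebra R X ⧸ uniformHolonomyIdeal R X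

namespace UniformHolonomy

theorem mkQ_sum_of_mem_center :
    (uniformHolonomyIdeal R X).mkQ (∑ i, of R i) ∈ LieAlgebra.center R (UniformHolonomy R X) := by
  refine mem_center_of_forall_lie_eq_zero (uniformHolonomyIdeal R X).mkQ_surjective fun i => ?_
  rw [← LieHom.map_lie, LieIdeal.mkQ_eq_zero_iff]
  exact LieSubmodule.subset_lieSpan ⟨i, rfl⟩

noncomputable def ofProdSnd : FreeLieAlgebra R Unit →ₗ⁅R⁆ UniformHolonomy R X :=
  lift R fun _ => (uniformHolonomyIdeal R X).mkQ (∑ i, of R i)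

theorem ofProdSnd_mem_center (b : FreeLieAlgebra R Unit) :
    ofProdSnd R X b ∈ LieAlgebra.center R (UniformHolonomy R X) :=
  hom_apply_mem (S := (LieAlgebra.center R _).toLieSubalgebra)
    (fun _ => by simpa [ofProdSnd] using mkQ_sum_of_mem_center R X) b

variable {X} {Y : Type*} (e : Option Y ≃ X)

noncomputable def ofProdFst : FreeLieAlgebra R Y →ₗ⁅R⁆ UniformHolonomy R X :=
  lift R fun j => (uniformHolonomyIdeal R X).mkQ (of R (e (some j)) - of R (e none))

noncomputable def ofProd :
    FreeLieAlgebra R Y × FreeLieAlgebra R Unit →ₗ⁅R⁆ UniformHolonomy R X :=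
  LieHom.coprod (ofProdFst R e) (ofProdSnd R X) fun _ b =>
    (LieModule.mem_maxTrivSubmodule R _ _ _).mp (ofProdSnd_mem_center R X b) _

variable {R}

theorem ofProdFst_elim (o : Option Y) :
    ofProdFst R e (o.elim 0 (of R)) =
      (uniformHolonomyIdeal R X).mkQ (of R (e o)) -
        (uniformHolonomyIdeal R X).mkQ (of R (e none)) := by
  cases o <;> simp [ofProdFst]

variable [Fintype Y]

theorem ofProdFst_sum_of :
    ofProdFst R e (∑ j, of R j) =
      (uniformHolonomyIdeal R X).mkQ (∑ i, of R i) -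
        Fintype.card X • (uniformHolonomyIdeal R X).mkQ (of R (e none)) := by
  simp only [map_sum, ofProdFst, lift_of_apply, map_sub, Finset.sum_sub_distrib,
    Finset.sum_const, Finset.card_univ, ← e.sum_comp, Fintype.sum_option,
    Fintype.card_congr e.symm, Fintype.card_option]
  rw [map_add, map_sum, succ_nsmul]
  abel

variable [Invertible (Fintype.card X : R)]

variable (R) in
/-- Inverts the change of generators `y_j = x_{e j} - x_{e none}`, `z = ∑ i, x_i` of `ofProd`:
`x_{e o} ↦ (y_o - (∑ j, y_j) / |X|, z / |X|)`, where `y_none = 0`. -/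
noncomputable def freeToProd :
    FreeLieAlgebra R X →ₗ⁅R⁆ FreeLieAlgebra R Y × FreeLieAlgebra R Unit :=
  lift R fun i => ((e.symm i).elim 0 (of R) - ⅟(Fintype.card X : R) • ∑ j, of R j,
    ⅟(Fintype.card X : R) • of R ())

theorem freeToProd_sum_of : freeToProd R e (∑ i, of R i) = (0, of R ()) := by
  simp only [map_sum, freeToProd, lift_of_apply, Prod.ext_iff, Prod.fst_sum, Prod.snd_sum,
    Finset.sum_sub_distrib, Finset.sum_const, Finset.card_univ, nsmul_invOf_smul]
  simp [← e.sum_comp, Fintype.sum_option]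

theorem uniformHolonomyIdeal_le_ker_freeToProd :
    uniformHolonomyIdeal R X ≤ (freeToProd R e).ker := by
  rw [uniformHolonomyIdeal, LieSubmodule.lieSpan_le]
  rintro _ ⟨i, rfl⟩
  rw [SetLike.mem_coe, LieHom.mem_ker, LieHom.map_lie, freeToProd_sum_of]
  simp [freeToProd]

variable (R) in
noncomputable def toProd :
    UniformHolonomy R X →ₗ⁅R⁆ FreeLieAlgebra R Y × FreeLieAlgebra R Unit :=
  (uniformHolonomyIdeal R X).liftQ (freeToProd R e) (uniformHolonomyIdeal_le_ker_freeToProd e)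

theorem toProd_comp_ofProdFst :
    (toProd R e).comp (ofProdFst R e) = LieHom.inl R _ (FreeLieAlgebra R Unit) :=
  hom_ext fun j => by simp [toProd, ofProdFst, freeToProd]

theorem toProd_comp_ofProdSnd :
    (toProd R e).comp (ofProdSnd R X) = LieHom.inr R (FreeLieAlgebra R Y) _ :=
  hom_ext fun _ => by
    simp only [LieHom.comp_apply, ofProdSnd, lift_of_apply, toProd, LieIdeal.liftQ_mkQ,
      freeToProd_sum_of, LieHom.inr_apply]

theorem toProd_ofProd (p : FreeLieAlgebra R Y × FreeLieAlgebra R Unit) :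
    toProd R e (ofProd R e p) = p := by
  have h₁ := LieHom.congr_fun (toProd_comp_ofProdFst e) p.1
  have h₂ := LieHom.congr_fun (toProd_comp_ofProdSnd (R := R) e) p.2
  simp_all [ofProd]

theorem ofProd_freeToProd_of (i : X) :
    ofProd R e (freeToProd R e (of R i)) = (uniformHolonomyIdeal R X).mkQ (of R i) := by
  obtain ⟨o, rfl⟩ := e.surjective i
  simp only [ofProd, freeToProd, lift_of_apply, LieHom.coprod_apply, map_sub, map_smul,
    ofProdFst_sum_of, ofProdFst_elim, e.symm_apply_apply]
  rw [smul_sub, smul_comm _ (Fintype.card X), nsmul_invOf_smul, ofProdSnd, lift_of_apply]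
  abel

theorem ofProd_comp_toProd : (ofProd R e).comp (toProd R e) = LieHom.id :=
  LieIdeal.lieHom_qext _ <| hom_ext fun i => by
    simpa [toProd] using ofProd_freeToProd_of e i

variable (R) in
noncomputable def equivProd :
    UniformHolonomy R X ≃ₗ⁅R⁆ FreeLieAlgebra R Y × FreeLieAlgebra R Unit :=
  { toProd R e with
    invFun := ofProd R e
    left_inv := LieHom.congr_fun (ofProd_comp_toProd e)
    right_inv := toProd_ofProd e }

end UniformHolonomy

end

/-- The holonomy Lie algebra of the uniform matroid `U_{2,n}`, i.e. the
quotient of the free Lie algebra on `x₁, …, xₙ` (over `ℚ`) by the Lie ideal generated by the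
elements `[xᵢ, x₁ + ⋯ + xₙ]`, is isomorphic to the direct product of a free Lie algebra on
`n - 1` generators and a free Lie algebra on one generator. -/
theorem holonomy_uniform_rank_two (n : ℕ) (hn : 2 ≤ n) :
    let L := FreeLieAlgebra ℚ (Fin n)
    let x : Fin n → L := FreeLieAlgebra.of ℚ
    let I : LieIdeal ℚ L :=
      LieSubmodule.lieSpan ℚ L {y | ∃ i : Fin n, y = ⁅x i, ∑ j : Fin n, x j⁆}
    Nonempty ((L ⧸ I) ≃ₗ⁅ℚ⁆ (FreeLieAlgebra ℚ (Fin (n - 1)) × FreeLieAlgebra ℚ Unit)) := by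
  intro L x I
  have : Invertible (Fintype.card (Fin n) : ℚ) := invertibleOfNonzero (by
    rw [Fintype.card_fin]
    exact Nat.cast_ne_zero.mpr (by omega))
  exact ⟨UniformHolonomy.equivProd ℚ ((finSuccEquiv (n - 1)).symm.trans (finCongr (by omega)))⟩
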